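/- Let G[X,Y] be a bipartite multigraph on finite disjoint vertex sets X and Y, and let f assign a natural number to each vertex of X ∪ Y. Then G has a spanning subgraph F with deg_F(v) = f(v) for every vertex v ∈ X ∪ Y if and only if ∑_{x∈X} f(x) = ∑_{y∈Y} f(y) and for every A ⊆ X one has ∑_{x∈A} f(x) ≤ ∑_{y∈Y} min{f(y), e_G(y,A)}. -/

import Mathlib

/-!
Necessity is double counting. For sufficiency, induct on `∑ f(x)`. Call `A ⊆ X` tight if equality
holds in Ore's condition. The right-hand side of the condition is submodular in `A`, so for a
fixed `x` with `f(x) > 0` the tight sets avoiding `x` are closed under union and have a largest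
member `T`. Ore's condition for `T ∪ {x}` produces `y` with `e_G(x,y) > 0` and `e_G(y,T) < f(y)`.
Removing one copy of `xy` and lowering `f(x)`, `f(y)` by one preserves Ore's condition: the
right-hand side drops by at most one, and it drops at all for some `A ∌ x` only if
`e_G(y,A) ≥ f(y)`, so `A ⊄ T` and `A` is not tight. Adding `xy` back to the factor given by
induction finishes the proof.
-/

open Finset

theorem Pi.single_le_iff {ι M : Type*} [DecidableEq ι] [AddMonoid M] [PartialOrder M]
    [CanonicallyOrderedAdd M] {i : ι} {a : M} {f : ι → M} :
    Pi.single i a ≤ f ↔ a ≤ f i := by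
  refine ⟨fun h => by simpa using h i, fun h j => ?_⟩
  rcases eq_or_ne j i with rfl | hj
  · simpa using h
  · simp [Pi.single_eq_of_ne hj]

theorem Finset.sum_tsub_pi_single {ι : Type*} [DecidableEq ι] {r : ι → ℕ} {i : ι}
    (hi : 0 < r i) (s : Finset ι) :
    ∑ j ∈ s, (r - Pi.single i 1 : ι → ℕ) j = ∑ j ∈ s, r j - if i ∈ s then 1 else 0 := by
  rw [← sum_pi_single' i 1 s]
  exact sum_tsub_distrib s fun j _ => Pi.single_le_iff.2 hi j

namespace BipartiteFactor

variable {X Y : Type*}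

def edge [DecidableEq X] [DecidableEq Y] (x : X) (y : Y) : X → Y → ℕ :=
  Pi.single x (Pi.single y 1)

section Edge

variable [DecidableEq X] [DecidableEq Y]

theorem edge_le_iff {e : X → Y → ℕ} {x : X} {y : Y} : edge x y ≤ e ↔ 0 < e x y := by
  simp only [edge, Pi.single_le_iff, Nat.one_le_iff_ne_zero, Nat.pos_iff_ne_zero]

theorem sum_edge_apply_row [Fintype Y] (x : X) (y : Y) (a : X) :
    ∑ b, edge x y a b = (Pi.single x 1 : X → ℕ) a := by
  rcases eq_or_ne a x with rfl | ha
  · simp [edge]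
  · simp [edge, Pi.single_eq_of_ne ha]

theorem sum_edge_apply_col (x : X) (y : Y) (A : Finset X) (b : Y) :
    ∑ a ∈ A, edge x y a b = if x ∈ A then (Pi.single y 1 : Y → ℕ) b else 0 := by
  simp only [edge, ← Finset.sum_apply, sum_pi_single']
  split_ifs <;> rfl

theorem sum_apply_le_sum_sub_edge_apply_add (e : X → Y → ℕ) (A : Finset X) (x : X) (y b : Y) :
    ∑ a ∈ A, e a b ≤ ∑ a ∈ A, (e - edge x y) a b + (Pi.single y 1 : Y → ℕ) b :=
  calc ∑ a ∈ A, e a b ≤ ∑ a ∈ A, ((e - edge x y) a b + edge x y a b) :=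
        sum_le_sum fun a _ => le_tsub_add
    _ ≤ _ := by
        rw [sum_add_distrib, sum_edge_apply_col]
        gcongr
        split_ifs <;> simp

theorem sum_sub_edge_apply_of_notMem (e : X → Y → ℕ) {A : Finset X} {x : X} (hx : x ∉ A)
    (y b : Y) : ∑ a ∈ A, (e - edge x y) a b = ∑ a ∈ A, e a b :=
  sum_congr rfl fun a ha => by simp [edge, Pi.single_eq_of_ne (ne_of_mem_of_not_mem ha hx)]

end Edge

def capacity [Fintype Y] (e : X → Y → ℕ) (c : Y → ℕ) (A : Finset X) : ℕ :=
  ∑ y, min (c y) (∑ x ∈ A, e x y)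

def OreCondition [Fintype Y] (e : X → Y → ℕ) (r : X → ℕ) (c : Y → ℕ) : Prop :=
  ∀ A : Finset X, ∑ x ∈ A, r x ≤ capacity e c A

def IsTight [Fintype Y] (e : X → Y → ℕ) (r : X → ℕ) (c : Y → ℕ) (A : Finset X) :
    Prop :=
  ∑ x ∈ A, r x = capacity e c A

def IsFactor [Fintype X] [Fintype Y] (e : X → Y → ℕ) (r : X → ℕ) (c : Y → ℕ)
    (F : X → Y → ℕ) : Prop :=
  (∀ x y, F x y ≤ e x y) ∧ (∀ x, ∑ y, F x y = r x) ∧ ∀ y, ∑ x, F x y = c y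

section Capacity

variable [Fintype Y] (e : X → Y → ℕ) (c : Y → ℕ)

theorem capacity_union_add_capacity_inter_le [DecidableEq X] (A B : Finset X) :
    capacity e c (A ∪ B) + capacity e c (A ∩ B) ≤ capacity e c A + capacity e c B := by
  simp only [capacity, ← sum_add_distrib]
  refine sum_le_sum fun y _ => ?_
  have hunion : ∑ x ∈ A ∪ B, e x y + ∑ x ∈ A ∩ B, e x y =
      ∑ x ∈ A, e x y + ∑ x ∈ B, e x y := sum_union_inter
  have hA : ∑ x ∈ A, e x y ≤ ∑ x ∈ A ∪ B, e x y :=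
    sum_le_sum_of_subset subset_union_left
  have hB : ∑ x ∈ B, e x y ≤ ∑ x ∈ A ∪ B, e x y :=
    sum_le_sum_of_subset subset_union_right
  omega

variable [DecidableEq X] [DecidableEq Y]

theorem capacity_le_capacity_sub_edge_add_one (A : Finset X) (x : X) (y : Y) :
    capacity e c A ≤ capacity (e - edge x y) (c - Pi.single y 1) A + 1 :=
  calc capacity e c A
      ≤ ∑ b, (min (c b - (Pi.single y 1 : Y → ℕ) b) (∑ a ∈ A, (e - edge x y) a b)
          + (Pi.single y 1 : Y → ℕ) b) := by
        refine sum_le_sum fun b _ => ?_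
        have := sum_apply_le_sum_sub_edge_apply_add e A x y b
        simp only [Pi.sub_apply] at this ⊢
        omega
    _ = _ := by simp [capacity, sum_add_distrib]

theorem capacity_sub_edge_of_notMem {A : Finset X} {x : X} (hx : x ∉ A) {y : Y}
    (hy : ∑ a ∈ A, e a y < c y) :
    capacity (e - edge x y) (c - Pi.single y 1) A = capacity e c A := by
  refine sum_congr rfl fun b _ => ?_
  rw [sum_sub_edge_apply_of_notMem e hx, Pi.sub_apply]
  rcases eq_or_ne b y with rfl | hb
  · simp only [Pi.single_eq_same]
    omega
  · simp [Pi.single_eq_of_ne hb]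

end Capacity

section Factor

variable [Fintype X] [Fintype Y] {e : X → Y → ℕ} {r : X → ℕ} {c : Y → ℕ} {F : X → Y → ℕ}

theorem IsFactor.sum_eq (hF : IsFactor e r c F) : ∑ x, r x = ∑ y, c y := by
  obtain ⟨-, hrow, hcol⟩ := hF
  simp only [← hrow, ← hcol]
  exact sum_comm

theorem IsFactor.oreCondition (hF : IsFactor e r c F) : OreCondition e r c := by
  obtain ⟨hle, hrow, hcol⟩ := hF
  intro A
  calc ∑ x ∈ A, r x = ∑ y, ∑ x ∈ A, F x y := by simp only [← hrow]; exact sum_comm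
    _ ≤ capacity e c A := sum_le_sum fun y _ => le_min
        (hcol y ▸ sum_le_sum_of_subset (subset_univ A)) (sum_le_sum fun x _ => hle x y)

theorem isFactor_zero (hr : ∑ x, r x = 0) (hc : ∑ y, c y = 0) : IsFactor e r c 0 := by
  simp only [sum_eq_zero_iff, mem_univ, true_implies] at hr hc
  exact ⟨fun _ _ => Nat.zero_le _, by simp [hr], by simp [hc]⟩

theorem IsFactor.add_edge [DecidableEq X] [DecidableEq Y] (hF : IsFactor e r c F)
    (x : X) (y : Y) :
    IsFactor (e + edge x y) (r + Pi.single x 1) (c + Pi.single y 1) (F + edge x y) := by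
  obtain ⟨hle, hrow, hcol⟩ := hF
  refine ⟨fun a b => Nat.add_le_add_right (hle a b) _, fun a => ?_, fun b => ?_⟩
  · simp only [Pi.add_apply, sum_add_distrib, hrow, sum_edge_apply_row]
  · simp only [Pi.add_apply, sum_add_distrib, hcol, sum_edge_apply_col, mem_univ, if_true]

end Factor

section Tight

variable [Fintype Y] {e : X → Y → ℕ} {r : X → ℕ} {c : Y → ℕ}

theorem OreCondition.supClosed_isTight [DecidableEq X] (h : OreCondition e r c) (x : X) :
    SupClosed {A | IsTight e r c A ∧ x ∉ A} := by
  rintro A ⟨hA, hxA⟩ B ⟨hB, hxB⟩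
  refine ⟨?_, by simp [hxA, hxB]⟩
  have hsub := capacity_union_add_capacity_inter_le e c A B
  have hsum : ∑ a ∈ A ∪ B, r a + ∑ a ∈ A ∩ B, r a = ∑ a ∈ A, r a + ∑ a ∈ B, r a :=
    sum_union_inter
  have := h (A ∪ B)
  have := h (A ∩ B)
  unfold IsTight at hA hB ⊢
  simp only [sup_eq_union]
  omega

theorem OreCondition.exists_isGreatest_isTight [Fintype X] [DecidableEq X]
    (h : OreCondition e r c) (x : X) : ∃ T, IsGreatest {A | IsTight e r c A ∧ x ∉ A} T := by
  classical
  refine ⟨(univ.filter (· ∈ {A | IsTight e r c A ∧ x ∉ A})).sup id, ?_,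
    fun A hA => le_sup (f := id) (mem_filter.2 ⟨mem_univ A, hA⟩)⟩
  have hempty : IsTight e r c ∅ := by simp [IsTight, capacity]
  exact (h.supClosed_isTight x).finsetSup_mem ⟨∅, by simpa using hempty⟩
    fun A hA => (mem_filter.1 hA).2

theorem OreCondition.exists_pos_of_isTight [DecidableEq X] (h : OreCondition e r c) {x : X}
    (hx : 0 < r x) {T : Finset X} (hT : IsTight e r c T) (hxT : x ∉ T) :
    ∃ y, 0 < e x y ∧ ∑ a ∈ T, e a y < c y := by
  have hlt : capacity e c T < capacity e c (insert x T) := by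
    have := h (insert x T)
    rw [sum_insert hxT] at this
    unfold IsTight at hT
    omega
  obtain ⟨y, -, hy⟩ := exists_lt_of_sum_lt hlt
  rw [sum_insert hxT] at hy
  exact ⟨y, by omega, by omega⟩

theorem OreCondition.sub_edge [DecidableEq X] [DecidableEq Y] (h : OreCondition e r c) {x : X}
    (hx : 0 < r x) {T : Finset X} (hT : IsGreatest {A | IsTight e r c A ∧ x ∉ A} T) {y : Y}
    (hy : ∑ a ∈ T, e a y < c y) :
    OreCondition (e - edge x y) (r - Pi.single x 1) (c - Pi.single y 1) := by
  intro A
  have hA := h A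
  have hcap := capacity_le_capacity_sub_edge_add_one e c A x y
  rw [sum_tsub_pi_single hx]
  by_cases hxA : x ∈ A
  · simp only [hxA, if_true]
    omega
  · simp only [hxA, if_false, Nat.sub_zero]
    by_cases htight : IsTight e r c A
    · have hAy := (sum_le_sum_of_subset (hT.2 ⟨htight, hxA⟩)).trans_lt hy
      rwa [capacity_sub_edge_of_notMem e c hxA hAy]
    · have := lt_of_le_of_ne hA htight
      omega

theorem OreCondition.exists_edge [Fintype X] [DecidableEq X] [DecidableEq Y]
    (h : OreCondition e r c) {x : X} (hx : 0 < r x) : ∃ y, 0 < e x y ∧ 0 < c y ∧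
      OreCondition (e - edge x y) (r - Pi.single x 1) (c - Pi.single y 1) := by
  obtain ⟨T, hT⟩ := h.exists_isGreatest_isTight x
  obtain ⟨y, hexy, hy⟩ := h.exists_pos_of_isTight hx hT.1.1 hT.1.2
  exact ⟨y, hexy, by omega, h.sub_edge hx hT hy⟩

end Tight

theorem exists_isFactor_of_oreCondition [Fintype X] [Fintype Y] [DecidableEq X]
    [DecidableEq Y]
    {e : X → Y → ℕ} {r : X → ℕ} {c : Y → ℕ} (hsum : ∑ x, r x = ∑ y, c y)
    (h : OreCondition e r c) : ∃ F, IsFactor e r c F := by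
  induction hn : ∑ x, r x generalizing e r c with
  | zero => exact ⟨0, isFactor_zero hn (by omega)⟩
  | succ n ih =>
    obtain ⟨x, -, hx⟩ := exists_ne_zero_of_sum_ne_zero (s := univ) (f := r) (by omega)
    replace hx := Nat.pos_of_ne_zero hx
    obtain ⟨y, hexy, hcy, h'⟩ := h.exists_edge hx
    have hr := sum_tsub_pi_single hx univ
    have hc := sum_tsub_pi_single hcy univ
    simp only [mem_univ, if_true] at hr hc
    obtain ⟨F, hF⟩ := ih (by omega) h' (by omega)
    refine ⟨F + edge x y, ?_⟩
    have := hF.add_edge x y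
    rwa [tsub_add_cancel_of_le (edge_le_iff.2 hexy), tsub_add_cancel_of_le
      (Pi.single_le_iff.2 hx), tsub_add_cancel_of_le (Pi.single_le_iff.2 hcy)] at this

end BipartiteFactor

open BipartiteFactor

/-- Ore's theorem: a bipartite multigraph `G[X,Y]` has an `f`-factor iff
`f(X) = f(Y)` and for every `A ⊆ X`,
`∑_{x∈A} f(x) ≤ ∑_{y∈Y} min{f(y), e_G(y,A)}`. -/
theorem bipartite_f_factor_ore
    {X Y : Type*} [Fintype X] [Fintype Y] [DecidableEq X] [DecidableEq Y]
    (eG : X → Y → ℕ) (f : X ⊕ Y → ℕ) :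
    (∃ eF : X → Y → ℕ,
      (∀ x y, eF x y ≤ eG x y) ∧
      (∀ x : X, ∑ y, eF x y = f (Sum.inl x)) ∧
      (∀ y : Y, ∑ x, eF x y = f (Sum.inr y)))
    ↔
    ((∑ x : X, f (Sum.inl x)) = (∑ y : Y, f (Sum.inr y)) ∧
     ∀ A : Finset X,
       ∑ x ∈ A, f (Sum.inl x) ≤
         ∑ y : Y, min (f (Sum.inr y)) (∑ x ∈ A, eG x y)) :=
  ⟨fun ⟨_, hF⟩ => ⟨IsFactor.sum_eq hF, IsFactor.oreCondition hF⟩,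
    fun ⟨hsum, h⟩ => exists_isFactor_of_oreCondition hsum h⟩
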